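/- arXiv:1210.2845 — 2 statements merged into one kernel-verified Lean document; each statement's English description precedes it below -/
import Mathlib

section
/- (Uniqueness of the symmetry operator and complementary states.) Let ρ_1,…,ρ_N be density matrices on ℂ^d with prior probabilities q_x ≥ 0, Σ_x q_x = 1. Suppose K and K̄ are Hermitian d×d matrices, S_1,…,S_N and S̄_1,…,S̄_N are positive semidefinite matrices with K = q_x ρ_x + S_x and K̄ = q_x ρ_x + S̄_x for every x, and there exist N-outcome POVMs (M_x) and (M̄_x) with K = Σ_x q_x ρ_x M_x and K̄ = Σ_x q_x ρ_x M̄_x. Then K = K̄, and consequently S_x = S̄_x for every x. -/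
/-!
Write `K̄ = Σ_x q_x ρ_x M̄_x = Σ_x (K - S_x) M̄_x = K - Σ_x S_x M̄_x`, and symmetrically
`K = K̄ - Σ_x S̄_x M_x`. The traces of `Σ_x S_x M̄_x` and `Σ_x S̄_x M_x` are nonnegative, being
traces of products of positive semidefinite matrices, and they add up to zero. So every
`tr(S_x M̄_x)` vanishes, which forces `S_x M̄_x = 0`, hence `K - K̄ = Σ_x S_x M̄_x = 0`.
-/

open BigOperators Matrix
open scoped ComplexOrder

/-- A density matrix: positive semidefinite with trace 1. -/
def IsDensityMatrix {d : ℕ} (ρ : Matrix (Fin d) (Fin d) ℂ) : Prop :=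
  ρ.PosSemidef ∧ ρ.trace = 1

/-- An N-outcome POVM: positive semidefinite elements summing to the identity. -/
def IsPOVM {d N : ℕ} (M : Fin N → Matrix (Fin d) (Fin d) ℂ) : Prop :=
  (∀ x, (M x).PosSemidef) ∧ ∑ x, M x = 1

namespace Matrix

variable {ι n 𝕜 : Type*} [Fintype ι] [Fintype n] [RCLike 𝕜]

open scoped MatrixOrder

/-- Writing `A = aᴴ a` and `B = bᴴ b`, the trace of `A B` is that of `Cᴴ C` with `C = a bᴴ`. -/
theorem PosSemidef.exists_mul_eq_and_trace_mul_eq {A B : Matrix n n 𝕜}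
    (hA : A.PosSemidef) (hB : B.PosSemidef) :
    ∃ a b C : Matrix n n 𝕜, A * B = aᴴ * C * b ∧ (A * B).trace = (Cᴴ * C).trace := by
  classical
  obtain ⟨a, rfl⟩ := CStarAlgebra.nonneg_iff_eq_star_mul_self.mp hA.nonneg
  obtain ⟨b, rfl⟩ := CStarAlgebra.nonneg_iff_eq_star_mul_self.mp hB.nonneg
  refine ⟨a, b, a * bᴴ, by simp only [star_eq_conjTranspose, Matrix.mul_assoc], ?_⟩
  simp only [star_eq_conjTranspose, conjTranspose_mul, conjTranspose_conjTranspose,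
    Matrix.mul_assoc]
  rw [trace_mul_comm b]
  simp only [Matrix.mul_assoc]

theorem PosSemidef.trace_mul_nonneg {A B : Matrix n n 𝕜}
    (hA : A.PosSemidef) (hB : B.PosSemidef) : 0 ≤ (A * B).trace := by
  obtain ⟨-, -, C, -, htr⟩ := hA.exists_mul_eq_and_trace_mul_eq hB
  exact htr ▸ (posSemidef_conjTranspose_mul_self C).trace_nonneg

theorem PosSemidef.mul_eq_zero_of_trace_mul_eq_zero {A B : Matrix n n 𝕜}
    (hA : A.PosSemidef) (hB : B.PosSemidef) (h : (A * B).trace = 0) : A * B = 0 := by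
  obtain ⟨a, b, C, hAB, htr⟩ := hA.exists_mul_eq_and_trace_mul_eq hB
  have hC : C = 0 := trace_conjTranspose_mul_self_eq_zero_iff.mp (htr ▸ h)
  rw [hAB, hC, Matrix.mul_zero, Matrix.zero_mul]

theorem trace_sum_mul_nonneg {S M : ι → Matrix n n 𝕜}
    (hS : ∀ x, (S x).PosSemidef) (hM : ∀ x, (M x).PosSemidef) :
    0 ≤ (∑ x, S x * M x).trace := by
  rw [trace_sum]
  exact Finset.sum_nonneg fun x _ => (hS x).trace_mul_nonneg (hM x)

theorem sum_mul_eq_zero_of_trace_nonpos {S M : ι → Matrix n n 𝕜}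
    (hS : ∀ x, (S x).PosSemidef) (hM : ∀ x, (M x).PosSemidef)
    (h : (∑ x, S x * M x).trace ≤ 0) : ∑ x, S x * M x = 0 := by
  have hnonneg : ∀ x ∈ Finset.univ, 0 ≤ (S x * M x).trace :=
    fun x _ => (hS x).trace_mul_nonneg (hM x)
  have hzero : ∑ x, (S x * M x).trace = 0 := by
    rw [← trace_sum]
    exact le_antisymm h (trace_sum_mul_nonneg hS hM)
  refine Finset.sum_eq_zero fun x hx => ?_
  exact (hS x).mul_eq_zero_of_trace_mul_eq_zero (hM x)
    ((Finset.sum_eq_zero_iff_of_nonneg hnonneg).mp hzero x hx)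

end Matrix

theorem sum_mul_eq_sub_sum_mul_of_sum_eq_one {ι R : Type*} [Fintype ι] [Ring R]
    {K : R} {A S M : ι → R} (hKS : ∀ x, K = A x + S x) (hM : ∑ x, M x = 1) :
    ∑ x, A x * M x = K - ∑ x, S x * M x := by
  have hA : ∀ x, A x = K - S x := fun x => eq_sub_of_add_eq (hKS x).symm
  simp only [hA, sub_mul, Finset.sum_sub_distrib, ← Finset.mul_sum, hM, mul_one]

theorem symmetry_operator_unique_general
    (d N : ℕ) (ρ : Fin N → Matrix (Fin d) (Fin d) ℂ)
    (q : Fin N → ℝ)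
    (K Kbar : Matrix (Fin d) (Fin d) ℂ)
    (S Sbar : Fin N → Matrix (Fin d) (Fin d) ℂ)
    (hS : ∀ x, (S x).PosSemidef) (hSbar : ∀ x, (Sbar x).PosSemidef)
    (hKS : ∀ x, K = (q x : ℂ) • ρ x + S x)
    (hKSbar : ∀ x, Kbar = (q x : ℂ) • ρ x + Sbar x)
    (M Mbar : Fin N → Matrix (Fin d) (Fin d) ℂ)
    (hM : IsPOVM M) (hMbar : IsPOVM Mbar)
    (hach : K = ∑ x, (q x : ℂ) • (ρ x * M x))
    (hachbar : Kbar = ∑ x, (q x : ℂ) • (ρ x * Mbar x)) :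
    K = Kbar ∧ ∀ x, S x = Sbar x := by
  simp only [← smul_mul_assoc] at hach hachbar
  have hSMbar : ∑ x, S x * Mbar x = K - Kbar := by
    rw [hachbar, sum_mul_eq_sub_sum_mul_of_sum_eq_one hKS hMbar.2, sub_sub_cancel]
  have hSbarM : ∑ x, Sbar x * M x = Kbar - K := by
    rw [hach, sum_mul_eq_sub_sum_mul_of_sum_eq_one hKSbar hM.2, sub_sub_cancel]
  have htrace : (∑ x, S x * Mbar x).trace ≤ 0 := by
    rw [hSMbar, ← neg_sub, trace_neg, neg_nonpos, ← hSbarM]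
    exact trace_sum_mul_nonneg hSbar hM.1
  have hKKbar : K = Kbar :=
    sub_eq_zero.mp (hSMbar ▸ sum_mul_eq_zero_of_trace_nonpos hS hMbar.1 htrace)
  exact ⟨hKKbar, fun x => add_left_cancel ((hKS x).symm.trans (hKKbar.trans (hKSbar x)))⟩

/-- uniqueness of the symmetry operator and complementary states: if `K`
and `K̄` are Hermitian with `K = q_x ρ_x + S_x`, `K̄ = q_x ρ_x + S̄_x` for positive
semidefinite `S_x, S̄_x`, and both are achieved by POVMs as `K = Σ_x q_x ρ_x M_x`,
`K̄ = Σ_x q_x ρ_x M̄_x`, then `K = K̄` and `S_x = S̄_x` for every `x`. -/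
theorem symmetry_operator_unique
    (d N : ℕ) (ρ : Fin N → Matrix (Fin d) (Fin d) ℂ)
    (hρ : ∀ x, IsDensityMatrix (ρ x))
    (q : Fin N → ℝ) (hq : ∀ x, 0 ≤ q x) (hq1 : ∑ x, q x = 1)
    (K Kbar : Matrix (Fin d) (Fin d) ℂ)
    (hK : K.IsHermitian) (hKbar : Kbar.IsHermitian)
    (S Sbar : Fin N → Matrix (Fin d) (Fin d) ℂ)
    (hS : ∀ x, (S x).PosSemidef) (hSbar : ∀ x, (Sbar x).PosSemidef)
    (hKS : ∀ x, K = (q x : ℂ) • ρ x + S x)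
    (hKSbar : ∀ x, Kbar = (q x : ℂ) • ρ x + Sbar x)
    (M Mbar : Fin N → Matrix (Fin d) (Fin d) ℂ)
    (hM : IsPOVM M) (hMbar : IsPOVM Mbar)
    (hach : K = ∑ x, (q x : ℂ) • (ρ x * M x))
    (hachbar : Kbar = ∑ x, (q x : ℂ) • (ρ x * Mbar x)) :
    K = Kbar ∧ ∀ x, S x = Sbar x :=
  symmetry_operator_unique_general d N ρ q K Kbar S Sbar hS hSbar hKS hKSbar M Mbar hM hMbar hach
    hachbar
end

section
/- (Construction of an ensemble from a symmetry operator.) Let ρ be a density matrix on ℂ^d, let ρ_1,…,ρ_N and σ_1,…,σ_N be density matrices, and let p_1,…,p_N ∈ (0,1] with ρ = p_x ρ_x + (1 − p_x) σ_x for every x. Suppose there exists an N-outcome POVM (M_x)_{x=1}^N with (1 − p_x) tr(M_x σ_x) = 0 for every x. Then, with priors q_x = p_x / Σ_y p_y, the POVM (M_x) is optimal and the guessing probability for the ensemble {q_x, ρ_x} equals exactly 1/(Σ_x p_x): for every N-outcome POVM (N_x), Σ_x q_x tr(N_x ρ_x) ≤ Σ_x q_x tr(M_x ρ_x) = 1/(Σ_x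 p_x). -/
open BigOperators Matrix
open scoped ComplexOrder

/-! For any POVM `(N_x)`, splitting `tr ρ = ∑_x tr(N_x ρ) = 1` along `ρ = p_x ρ_x + (1 - p_x) σ_x`
gives `∑_x p_x tr(N_x ρ_x) = 1 - ∑_x (1 - p_x) tr(N_x σ_x)`. The subtracted term is nonnegative,
since the trace of a product of positive semidefinite matrices is nonnegative, and it vanishes for
`M`. So `M` attains the bound `∑_x p_x tr(N_x ρ_x) ≤ 1`, and the priors `q_x` divide both sides
by `∑_x p_x`. -/

open scoped MatrixOrder in
theorem Matrix.PosSemidef.trace_mul_nonneg_s9 {n 𝕜 : Type*} [Fintype n] [DecidableEq n] [RCLike 𝕜]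
    {A B : Matrix n n 𝕜} (hA : A.PosSemidef) (hB : B.PosSemidef) : 0 ≤ (A * B).trace := by
  -- `tr(AB) = tr(√A B √A)`, and `√A B √A` is positive semidefinite.
  have hsqrt := (CFC.sqrt_nonneg A).posSemidef.isHermitian
  have hconj : (CFC.sqrt A * B * CFC.sqrt A).PosSemidef := by
    simpa only [hsqrt.eq] using hB.mul_mul_conjTranspose_same (CFC.sqrt A)
  simpa only [trace_mul_cycle, ← sq, CFC.sq_sqrt A hA.nonneg] using hconj.trace_nonneg

theorem Matrix.PosSemidef.re_trace_mul_nonneg {n : Type*} [Fintype n] [DecidableEq n]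
    {A B : Matrix n n ℂ} (hA : A.PosSemidef) (hB : B.PosSemidef) : 0 ≤ (A * B).trace.re :=
  (Complex.nonneg_iff.mp (hA.trace_mul_nonneg_s9 hB)).1

theorem IsPOVM.sum_trace_mul {d N : ℕ} {M : Fin N → Matrix (Fin d) (Fin d) ℂ} (hM : IsPOVM M)
    (ρ : Matrix (Fin d) (Fin d) ℂ) : ∑ x, (M x * ρ).trace = ρ.trace := by
  rw [← trace_sum, ← Finset.sum_mul, hM.2, Matrix.one_mul]

section Decomposition

variable {d N : ℕ} {ρ : Matrix (Fin d) (Fin d) ℂ} {ρs σs : Fin N → Matrix (Fin d) (Fin d) ℂ}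
  {p : Fin N → ℝ} {M : Fin N → Matrix (Fin d) (Fin d) ℂ}

theorem re_trace_mul_eq_of_decomposition (A : Matrix (Fin d) (Fin d) ℂ) {q : ℝ}
    {τ τ' : Matrix (Fin d) (Fin d) ℂ} (hdec : ρ = (q : ℂ) • τ + ((1 - q : ℝ) : ℂ) • τ') :
    (A * ρ).trace.re = q * (A * τ).trace.re + (1 - q) * (A * τ').trace.re := by
  simp only [hdec, Matrix.mul_add, Matrix.mul_smul, trace_add, trace_smul, smul_eq_mul,
    Complex.add_re, Complex.re_ofReal_mul]

theorem IsPOVM.sum_success_add_sum_error (hM : IsPOVM M) (htr : ρ.trace = 1)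
    (hdec : ∀ x, ρ = (p x : ℂ) • ρs x + ((1 - p x : ℝ) : ℂ) • σs x) :
    ∑ x, p x * (M x * ρs x).trace.re + ∑ x, (1 - p x) * (M x * σs x).trace.re = 1 := by
  rw [← Finset.sum_add_distrib]
  simp_rw [← re_trace_mul_eq_of_decomposition _ (hdec _)]
  rw [← Complex.re_sum, hM.sum_trace_mul, htr, Complex.one_re]

theorem IsPOVM.sum_success_le_one (hM : IsPOVM M) (htr : ρ.trace = 1)
    (hdec : ∀ x, ρ = (p x : ℂ) • ρs x + ((1 - p x : ℝ) : ℂ) • σs x)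
    (hp1 : ∀ x, p x ≤ 1) (hσs : ∀ x, (σs x).PosSemidef) :
    ∑ x, p x * (M x * ρs x).trace.re ≤ 1 := by
  have herror : 0 ≤ ∑ x, (1 - p x) * (M x * σs x).trace.re :=
    Finset.sum_nonneg fun x _ =>
      mul_nonneg (sub_nonneg.mpr (hp1 x)) ((hM.1 x).re_trace_mul_nonneg (hσs x))
  linarith [hM.sum_success_add_sum_error htr hdec]

theorem IsPOVM.sum_success_eq_one (hM : IsPOVM M) (htr : ρ.trace = 1)
    (hdec : ∀ x, ρ = (p x : ℂ) • ρs x + ((1 - p x : ℝ) : ℂ) • σs x)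
    (horth : ∀ x, (1 - p x) * (M x * σs x).trace.re = 0) :
    ∑ x, p x * (M x * ρs x).trace.re = 1 := by
  simpa only [horth, Finset.sum_const_zero, add_zero] using
    hM.sum_success_add_sum_error htr hdec

end Decomposition

theorem sum_div_sum_mul {ι : Type*} (s : Finset ι) (p t : ι → ℝ) :
    ∑ x ∈ s, (p x / ∑ y ∈ s, p y) * t x = (∑ x ∈ s, p x * t x) / ∑ y ∈ s, p y := by
  simp_rw [Finset.sum_div, div_mul_eq_mul_div]

theorem ensemble_from_symmetry_operator_general
    (d N : ℕ) (ρ : Matrix (Fin d) (Fin d) ℂ) (hρ : IsDensityMatrix ρ)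
    (ρs σs : Fin N → Matrix (Fin d) (Fin d) ℂ)
    (hσs : ∀ x, IsDensityMatrix (σs x))
    (p : Fin N → ℝ) (hp0 : ∀ x, 0 < p x) (hp1 : ∀ x, p x ≤ 1)
    (hdec : ∀ x, ρ = (p x : ℂ) • ρs x + ((1 - p x : ℝ) : ℂ) • σs x)
    (M : Fin N → Matrix (Fin d) (Fin d) ℂ) (hM : IsPOVM M)
    (horth : ∀ x, (1 - p x) * ((M x * σs x).trace).re = 0) :
    (∀ Nx : Fin N → Matrix (Fin d) (Fin d) ℂ, IsPOVM Nx →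
      ∑ x, (p x / ∑ y, p y) * ((Nx x * ρs x).trace).re ≤
        ∑ x, (p x / ∑ y, p y) * ((M x * ρs x).trace).re) ∧
    ∑ x, (p x / ∑ y, p y) * ((M x * ρs x).trace).re = 1 / ∑ x, p x := by
  have hM_success := hM.sum_success_eq_one hρ.2 hdec horth
  refine ⟨fun Nx hNx => ?_, by rw [sum_div_sum_mul, hM_success]⟩
  rw [sum_div_sum_mul, sum_div_sum_mul, hM_success]
  exact div_le_div_of_nonneg_right (hNx.sum_success_le_one hρ.2 hdec hp1 fun x => (hσs x).1)
    (Finset.sum_nonneg fun x _ => (hp0 x).le)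

/-- construction of an ensemble from a symmetry operator: if
`ρ = p_x ρ_x + (1 − p_x) σ_x` with `p_x ∈ (0,1]` and there is a POVM `(M_x)` with
`(1 − p_x) tr(M_x σ_x) = 0` for all `x`, then with priors `q_x = p_x / Σ_y p_y` the
POVM `(M_x)` is optimal and the guessing probability equals `1 / Σ_x p_x`. -/
theorem ensemble_from_symmetry_operator
    (d N : ℕ) (ρ : Matrix (Fin d) (Fin d) ℂ) (hρ : IsDensityMatrix ρ)
    (ρs σs : Fin N → Matrix (Fin d) (Fin d) ℂ)
    (hρs : ∀ x, IsDensityMatrix (ρs x)) (hσs : ∀ x, IsDensityMatrix (σs x))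
    (p : Fin N → ℝ) (hp0 : ∀ x, 0 < p x) (hp1 : ∀ x, p x ≤ 1)
    (hdec : ∀ x, ρ = (p x : ℂ) • ρs x + ((1 - p x : ℝ) : ℂ) • σs x)
    (M : Fin N → Matrix (Fin d) (Fin d) ℂ) (hM : IsPOVM M)
    (horth : ∀ x, (1 - p x) * ((M x * σs x).trace).re = 0) :
    (∀ Nx : Fin N → Matrix (Fin d) (Fin d) ℂ, IsPOVM Nx →
      ∑ x, (p x / ∑ y, p y) * ((Nx x * ρs x).trace).re ≤
        ∑ x, (p x / ∑ y, p y) * ((M x * ρs x).trace).re) ∧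
    ∑ x, (p x / ∑ y, p y) * ((M x * ρs x).trace).re = 1 / ∑ x, p x :=
  ensemble_from_symmetry_operator_general d N ρ hρ ρs σs hσs p hp0 hp1 hdec M hM horth
end
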